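/- Let X = [1,∞) with the Euclidean metric, S : X → X defined by Sx = 4√x, and m(x,y) = max{|x−y|, |x−Sx|, |y−Sy|, (|x−Sy|+|y−Sx|)/2}. Then for x = 1 and y = 4 one has |Sx − Sy| = m(x,y) = 4; consequently, there is no k ∈ [0,1) such that |Sx − Sy| ≤ k · m(x,y) for all x, y ∈ X. -/
import Mathlib

/-- The map `S x = 4√x`. -/
noncomputable def Smap (x : ℝ) : ℝ := 4 * Real.sqrt x

/-- The quantity `m(x,y)` from Rhoades' theorem for the map `Smap`. -/
noncomputable def mS (x y : ℝ) : ℝ :=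
  max (max |x - y| |x - Smap x|)
      (max |y - Smap y| ((|x - Smap y| + |y - Smap x|) / 2))

theorem rhoades_condition_fails :
    |Smap 1 - Smap 4| = 4 ∧ mS 1 4 = 4 ∧
      ¬ ∃ k : ℝ, 0 ≤ k ∧ k < 1 ∧
        ∀ x ∈ Set.Ici (1 : ℝ), ∀ y ∈ Set.Ici (1 : ℝ),
          |Smap x - Smap y| ≤ k * mS x y := by
  have h4 : Real.sqrt 4 = 2 := by
    rw [show (4:ℝ) = 2 ^ 2 by norm_num, Real.sqrt_sq (by norm_num : (0:ℝ) ≤ 2)]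
  have hS1 : Smap 1 = 4 := by simp [Smap]
  have hS4 : Smap 4 = 8 := by rw [Smap, h4]; norm_num
  have habs : |Smap 1 - Smap 4| = 4 := by rw [hS1, hS4]; norm_num
  have hm : mS 1 4 = 4 := by
    rw [mS, hS1, hS4]
    rw [show |(1:ℝ) - 4| = 3 by rw [abs_of_nonpos] <;> norm_num,
        show |(4:ℝ) - 8| = 4 by rw [abs_of_nonpos] <;> norm_num,
        show |(1:ℝ) - 8| = 7 by rw [abs_of_nonpos] <;> norm_num,
        show |(4:ℝ) - 4| = 0 by norm_num]
    norm_num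
  refine ⟨habs, hm, ?_⟩
  rintro ⟨k, hk0, hk1, h⟩
  have := h 1 (by norm_num) 4 (by norm_num)
  rw [habs, hm] at this
  nlinarith
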